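/- The convolution of two double exponential densities with the same parameters (η₁, η₂, p, q) evaluated at u ≥ 0 equals e^{-η₁u}·(P_{2,1}·η₁ + P_{2,2}·η₁²·u), where P_{2,2} = p² and P_{2,1} = 2pq·η₂/(η₁+η₂). -/

import Mathlib

/-!
Split the line at `0` and `u`. On `[0, u]` both arguments `u - v` and `v` are nonnegative, so the
integrand is the constant `p² η₁² e^{-η₁ u}`, which gives the term linear in `u`. On `(-∞, 0)` and
on `(u, ∞)` exactly one argument is negative; the integrand is then `p q η₁ η₂ e^{-η₁ u} e^{(η₁+η₂) v}`,
resp. its mirror image under `v ↦ u - v`, and each tail contributes `p q η₁ η₂ e^{-η₁ u} / (η₁ + η₂)`.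
-/

open Real MeasureTheory Set

theorem integral_eq_Iio_add_Icc_add_Ioi {E : Type*} [NormedAddCommGroup E] [NormedSpace ℝ E]
    {g : ℝ → E} {a b : ℝ} (hab : a ≤ b) (h₁ : IntegrableOn g (Iio a))
    (h₂ : IntegrableOn g (Icc a b)) (h₃ : IntegrableOn g (Ioi b)) :
    ∫ x, g x = (∫ x in Iio a, g x) + (∫ x in Icc a b, g x) + ∫ x in Ioi b, g x := by
  have hdisj : Disjoint (Icc a b) (Ioi b) := Set.disjoint_left.mpr fun _ hx hx' => hx'.not_ge hx.2
  rw [← intervalIntegral.integral_Iio_add_Ici h₁ (Icc_union_Ioi_eq_Ici hab ▸ h₂.union h₃),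
    ← Icc_union_Ioi_eq_Ici hab, setIntegral_union hdisj measurableSet_Ioi h₂ h₃, add_assoc]

noncomputable def doubleExpDensity (η₁ η₂ p q u : ℝ) : ℝ :=
  if 0 ≤ u then p * η₁ * exp (-η₁ * u) else q * η₂ * exp (η₂ * u)

section DoubleExpDensity

variable {η₁ η₂ p q u : ℝ}

theorem doubleExpDensity_of_nonneg (hu : 0 ≤ u) :
    doubleExpDensity η₁ η₂ p q u = p * η₁ * exp (-η₁ * u) := if_pos hu

theorem doubleExpDensity_of_neg (hu : u < 0) :
    doubleExpDensity η₁ η₂ p q u = q * η₂ * exp (η₂ * u) := if_neg hu.not_ge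

variable (η₁ η₂ p q)

theorem doubleExpDensity_sub_mul_eqOn_Iio (hu : 0 ≤ u) :
    EqOn (fun v => doubleExpDensity η₁ η₂ p q (u - v) * doubleExpDensity η₁ η₂ p q v)
      (fun v => p * q * η₁ * η₂ * exp (-η₁ * u) * exp ((η₁ + η₂) * v)) (Iio 0) := by
  intro v (hv : v < 0)
  have hexp : exp (-η₁ * (u - v)) * exp (η₂ * v) = exp (-η₁ * u) * exp ((η₁ + η₂) * v) := by
    rw [← exp_add, ← exp_add]; ring_nf
  simp only [doubleExpDensity_of_nonneg (by linarith : 0 ≤ u - v), doubleExpDensity_of_neg hv]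
  linear_combination p * q * η₁ * η₂ * hexp

theorem doubleExpDensity_sub_mul_eqOn_Icc :
    EqOn (fun v => doubleExpDensity η₁ η₂ p q (u - v) * doubleExpDensity η₁ η₂ p q v)
      (fun _ => p ^ 2 * η₁ ^ 2 * exp (-η₁ * u)) (Icc 0 u) := by
  intro v ⟨hv₀, hvu⟩
  simp only [doubleExpDensity_of_nonneg (sub_nonneg.mpr hvu), doubleExpDensity_of_nonneg hv₀]
  rw [mul_mul_mul_comm, ← exp_add]
  ring_nf

theorem doubleExpDensity_sub_mul_eqOn_Ioi (hu : 0 ≤ u) :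
    EqOn (fun v => doubleExpDensity η₁ η₂ p q (u - v) * doubleExpDensity η₁ η₂ p q v)
      (fun v => p * q * η₁ * η₂ * exp (η₂ * u) * exp (-(η₁ + η₂) * v)) (Ioi u) := by
  intro v (hv : u < v)
  have hexp : exp (η₂ * (u - v)) * exp (-η₁ * v) = exp (η₂ * u) * exp (-(η₁ + η₂) * v) := by
    rw [← exp_add, ← exp_add]; ring_nf
  simp only [doubleExpDensity_of_neg (by linarith : u - v < 0),
    doubleExpDensity_of_nonneg (by linarith : 0 ≤ v)]
  linear_combination p * q * η₁ * η₂ * hexp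

end DoubleExpDensity

theorem double_exponential_selfconvolution_nonneg_general
    (η₁ η₂ p q : ℝ) (hη₁ : 0 < η₁) (hη₂ : 0 < η₂)
    (f : ℝ → ℝ)
    (hf : ∀ u : ℝ, f u = if 0 ≤ u then p * η₁ * Real.exp (-η₁ * u)
        else q * η₂ * Real.exp (η₂ * u))
    (u : ℝ) (hu : 0 ≤ u) :
    ∫ v : ℝ, f (u - v) * f v =
      Real.exp (-η₁ * u) *
        ((2 * p * q * η₂ / (η₁ + η₂)) * η₁ + p ^ 2 * η₁ ^ 2 * u) := by
  obtain rfl : f = doubleExpDensity η₁ η₂ p q := funext hf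
  have hc : 0 < η₁ + η₂ := add_pos hη₁ hη₂
  have e₁ := doubleExpDensity_sub_mul_eqOn_Iio η₁ η₂ p q hu
  have e₂ := doubleExpDensity_sub_mul_eqOn_Icc η₁ η₂ p q (u := u)
  have e₃ := doubleExpDensity_sub_mul_eqOn_Ioi η₁ η₂ p q hu
  have hexp : exp (η₂ * u) * exp (-(η₁ + η₂) * u) = exp (-η₁ * u) := by
    rw [← exp_add]; ring_nf
  rw [integral_eq_Iio_add_Icc_add_Ioi hu
      (IntegrableOn.congr_fun
        (((integrableOn_exp_mul_Iic hc 0).mono_set Iio_subset_Iic_self).const_mul _)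
        e₁.symm measurableSet_Iio)
      (IntegrableOn.congr_fun (integrableOn_const measure_Icc_lt_top.ne) e₂.symm measurableSet_Icc)
      (IntegrableOn.congr_fun ((integrableOn_exp_mul_Ioi (neg_neg_of_pos hc) u).const_mul _)
        e₃.symm measurableSet_Ioi),
    setIntegral_congr_fun measurableSet_Iio e₁, setIntegral_congr_fun measurableSet_Icc e₂,
    setIntegral_congr_fun measurableSet_Ioi e₃, setIntegral_const, Real.volume_real_Icc_of_le hu,
    smul_eq_mul, integral_const_mul, integral_const_mul, ← integral_Iic_eq_integral_Iio,
    integral_exp_mul_Iic hc, integral_exp_mul_Ioi (neg_neg_of_pos hc), mul_zero, exp_zero,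
    neg_div_neg_eq]
  linear_combination p * q * η₁ * η₂ / (η₁ + η₂) * hexp

/-- The convolution of two double exponential densities with the same parameters,
evaluated at u ≥ 0, equals e^{-η₁u}·(P₂₁·η₁ + P₂₂·η₁²·u) with P₂₂ = p² and
P₂₁ = 2pq·η₂/(η₁+η₂). -/
theorem double_exponential_selfconvolution_nonneg
    (η₁ η₂ p q : ℝ) (hη₁ : 0 < η₁) (hη₂ : 0 < η₂) (hp : 0 < p) (hq : 0 < q)
    (hpq : p + q = 1)
    (f : ℝ → ℝ)
    (hf : ∀ u : ℝ, f u = if 0 ≤ u then p * η₁ * Real.exp (-η₁ * u)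
        else q * η₂ * Real.exp (η₂ * u))
    (u : ℝ) (hu : 0 ≤ u) :
    ∫ v : ℝ, f (u - v) * f v =
      Real.exp (-η₁ * u) *
        ((2 * p * q * η₂ / (η₁ + η₂)) * η₁ + p ^ 2 * η₁ ^ 2 * u) :=
  double_exponential_selfconvolution_nonneg_general η₁ η₂ p q hη₁ hη₂ f hf u hu
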